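/- For every t ∈ [-1, 1], the three vectors (1,1,1), (-1,1,1), (t,1,-1) form an Auerbach basis of l^3_∞; consequently l^3_∞ has infinitely many pairwise inequivalent Auerbach bases. -/
import Mathlib


/-- `v` is an Auerbach basis of `l^3_∞` (here `‖·‖` on `Fin 3 → ℝ` is the sup-norm). -/
def IsAuerbachInf (v : Fin 3 → Fin 3 → ℝ) : Prop :=
  LinearIndependent ℝ v ∧ ∀ i, ‖v i‖ = 1 ∧
    ∀ w ∈ Submodule.span ℝ (v '' {j | j ≠ i}), ‖v i‖ ≤ ‖v i + w‖

/-- Equivalence of bases by permuting and negating rows/columns. -/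
def EquivBases (A B : Fin 3 → Fin 3 → ℝ) : Prop :=
  ∃ (σ τ : Equiv.Perm (Fin 3)) (ε δ : Fin 3 → ℝ),
    (∀ i, ε i = 1 ∨ ε i = -1) ∧ (∀ j, δ j = 1 ∨ δ j = -1) ∧
    ∀ i j, B i j = ε i * δ j * A (σ i) (τ j)

lemma one_le_norm_fin3 (x : Fin 3 → ℝ) (a b c : ℝ) (habc : |a| + |b| + |c| ≤ 1)
    (hx : a * x 0 + b * x 1 + c * x 2 = 1) : 1 ≤ ‖x‖ := by
  have hN : 0 ≤ ‖x‖ := norm_nonneg x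
  have h0 : |x 0| ≤ ‖x‖ := by simpa [Real.norm_eq_abs] using norm_le_pi_norm x 0
  have h1 : |x 1| ≤ ‖x‖ := by simpa [Real.norm_eq_abs] using norm_le_pi_norm x 1
  have h2 : |x 2| ≤ ‖x‖ := by simpa [Real.norm_eq_abs] using norm_le_pi_norm x 2
  have e0 : a * x 0 ≤ |a| * ‖x‖ :=
    le_trans (le_trans (le_abs_self _) (abs_mul a (x 0)).le)
      (mul_le_mul_of_nonneg_left h0 (abs_nonneg a))
  have e1 : b * x 1 ≤ |b| * ‖x‖ :=
    le_trans (le_trans (le_abs_self _) (abs_mul b (x 1)).le)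
      (mul_le_mul_of_nonneg_left h1 (abs_nonneg b))
  have e2 : c * x 2 ≤ |c| * ‖x‖ :=
    le_trans (le_trans (le_abs_self _) (abs_mul c (x 2)).le)
      (mul_le_mul_of_nonneg_left h2 (abs_nonneg c))
  nlinarith [mul_le_mul_of_nonneg_right habc hN]

lemma auerbach_aux (t : ℝ) (ht : t ∈ Set.Icc (-1 : ℝ) 1) :
    IsAuerbachInf ![![1, 1, 1], ![-1, 1, 1], ![t, 1, -1]] := by
  obtain ⟨ht1, ht2⟩ := ht
  set v : Fin 3 → Fin 3 → ℝ := ![![1, 1, 1], ![-1, 1, 1], ![t, 1, -1]] with hv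
  have hnorm : ∀ i, ‖v i‖ = 1 := by
    intro i
    refine le_antisymm ((pi_norm_le_iff_of_nonneg zero_le_one).2 ?_) ?_
    · intro j
      fin_cases i <;> fin_cases j <;>
        · simp [hv, Real.norm_eq_abs, abs_le, Matrix.vecHead, Matrix.vecTail]
          try constructor <;> linarith
    · calc (1:ℝ) = ‖v i 1‖ := by
            fin_cases i <;> simp [hv, Matrix.vecHead, Matrix.vecTail]
        _ ≤ ‖v i‖ := norm_le_pi_norm (v i) 1
  constructor
  · rw [Fintype.linearIndependent_iff]
    intro g hg
    have h0 := congrFun hg 0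
    have h1 := congrFun hg 1
    have h2 := congrFun hg 2
    simp [hv, Fin.sum_univ_three, Matrix.vecHead, Matrix.vecTail] at h0 h1 h2
    have hc : g 2 = 0 := by linarith
    have hcc : g 2 * t = 0 := by rw [hc]; ring
    have ha : g 0 = 0 := by linarith
    have hb : g 1 = 0 := by linarith
    intro i; fin_cases i <;> [exact ha; exact hb; exact hc]
  · intro i
    refine ⟨hnorm i, ?_⟩
    fin_cases i
    · show ∀ w ∈ Submodule.span ℝ (v '' {j | j ≠ (0:Fin 3)}), ‖v 0‖ ≤ ‖v 0 + w‖
      intro w hw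
      rw [hnorm 0]
      rw [show ({j | j ≠ (0:Fin 3)} : Set (Fin 3)) = {1, 2} by ext j; fin_cases j <;> simp,
        Set.image_insert_eq, Set.image_singleton, Submodule.mem_span_pair] at hw
      obtain ⟨c, d, rfl⟩ := hw
      refine one_le_norm_fin3 _ (1/2) ((1-t)/4) ((1+t)/4) ?_ ?_
      · rw [abs_of_nonneg (by norm_num : (0:ℝ) ≤ 1/2),
          abs_of_nonneg (by linarith : (0:ℝ) ≤ (1-t)/4),
          abs_of_nonneg (by linarith : (0:ℝ) ≤ (1+t)/4)]
        linarith
      · simp [hv, Matrix.vecHead, Matrix.vecTail]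
        ring
    · show ∀ w ∈ Submodule.span ℝ (v '' {j | j ≠ (1:Fin 3)}), ‖v 1‖ ≤ ‖v 1 + w‖
      intro w hw
      rw [hnorm 1]
      rw [show ({j | j ≠ (1:Fin 3)} : Set (Fin 3)) = {0, 2} by ext j; fin_cases j <;> simp,
        Set.image_insert_eq, Set.image_singleton, Submodule.mem_span_pair] at hw
      obtain ⟨c, d, rfl⟩ := hw
      refine one_le_norm_fin3 _ (-(1/2)) ((1+t)/4) ((1-t)/4) ?_ ?_
      · rw [abs_of_nonpos (by norm_num : (-(1/2):ℝ) ≤ 0),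
          abs_of_nonneg (by linarith : (0:ℝ) ≤ (1+t)/4),
          abs_of_nonneg (by linarith : (0:ℝ) ≤ (1-t)/4)]
        linarith
      · simp [hv, Matrix.vecHead, Matrix.vecTail]
        ring
    · show ∀ w ∈ Submodule.span ℝ (v '' {j | j ≠ (2:Fin 3)}), ‖v 2‖ ≤ ‖v 2 + w‖
      intro w hw
      rw [hnorm 2]
      rw [show ({j | j ≠ (2:Fin 3)} : Set (Fin 3)) = {0, 1} by ext j; fin_cases j <;> simp,
        Set.image_insert_eq, Set.image_singleton, Submodule.mem_span_pair] at hw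
      obtain ⟨c, d, rfl⟩ := hw
      refine one_le_norm_fin3 _ 0 (1/2) (-(1/2)) (by norm_num [abs_of_nonneg]) ?_
      simp [hv, Matrix.vecHead, Matrix.vecTail]
      ring

/-- For every `t ∈ [-1,1]`, the rows `(1,1,1), (-1,1,1), (t,1,-1)` form an Auerbach basis of
`l^3_∞`; consequently `l^3_∞` has infinitely many pairwise inequivalent Auerbach bases. -/
theorem stmt9 :
    (∀ t ∈ Set.Icc (-1 : ℝ) 1, IsAuerbachInf ![![1, 1, 1], ![-1, 1, 1], ![t, 1, -1]]) ∧
    ∃ S : Set (Fin 3 → Fin 3 → ℝ), S.Infinite ∧ (∀ v ∈ S, IsAuerbachInf v) ∧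
      ∀ v ∈ S, ∀ w ∈ S, v ≠ w → ¬ EquivBases v w := by
  refine ⟨fun t ht => auerbach_aux t ht, ?_⟩
  refine ⟨(fun t : ℝ => ![![1, 1, 1], ![-1, 1, 1], ![t, 1, -1]]) '' Set.Ioo 0 1, ?_, ?_, ?_⟩
  · refine (Set.Ioo_infinite (by norm_num)).image ?_
    intro s _ t _ h
    have := congrFun (congrFun h 2) 0
    simpa using this
  · rintro v ⟨t, ht, rfl⟩
    exact auerbach_aux t ⟨by linarith [ht.1], le_of_lt ht.2⟩
  · rintro v ⟨s, hs, rfl⟩ w ⟨t, ht, rfl⟩ hne ⟨σ, τ, ε, δ, hε, hδ, h⟩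
    have hst : s ≠ t := by
      rintro rfl; exact hne rfl
    have key := h 2 0
    have hA : ∀ i j, (![![1, 1, 1], ![-1, 1, 1], ![(s:ℝ), 1, -1]]) i j = 1 ∨
        (![![1, 1, 1], ![-1, 1, 1], ![(s:ℝ), 1, -1]]) i j = -1 ∨
        (![![1, 1, 1], ![-1, 1, 1], ![(s:ℝ), 1, -1]]) i j = s := by
      intro i j; fin_cases i <;> fin_cases j <;> simp [Matrix.vecHead, Matrix.vecTail]
    have key' : t = ε 2 * δ 0 *
        (![![1, 1, 1], ![-1, 1, 1], ![(s:ℝ), 1, -1]]) (σ 2) (τ 0) := by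
      simpa using key
    obtain ⟨hs0, hs1⟩ := hs
    obtain ⟨ht0, ht1⟩ := ht
    rcases hε 2 with h1 | h1 <;> rcases hδ 0 with h2 | h2 <;>
      rcases hA (σ 2) (τ 0) with h3 | h3 | h3 <;>
      rw [h1, h2, h3] at key' <;> norm_num at key' <;>
      first
        | linarith
        | (exact hst (key'.symm))
        | (exact hst (by linarith))
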